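/- arXiv:1201.6538 — 4 statements merged into one kernel-verified Lean document; each statement's English description precedes it below -/
import Mathlib

section
/- For every nonnegative integer i and any complex parameter β, the monomial z^i/i! can be expanded as z^i/i! = (-1)^i · Σ_{j=0}^{i} C(-β, i-j) · L_j^{(β-j)}(z), where L_j^{(α)} denotes the generalized Laguerre polynomial and C(x,k) is the generalized binomial coefficient. -/
open Finset

/-- Generalized binomial coefficient C(x, k) = x(x-1)⋯(x-k+1)/k!. -/
noncomputable def gbinom (x : ℂ) (k : ℕ) : ℂ :=
  (∏ j ∈ Finset.range k, (x - j)) / (k.factorial : ℂ)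

/-- Generalized Laguerre polynomial L_i^{(α)}(z) = Σ_{j=0}^i (-1)^j C(i+α, i-j) z^j / j!. -/
noncomputable def lag (i : ℕ) (α z : ℂ) : ℂ :=
  ∑ j ∈ Finset.range (i + 1), (-1 : ℂ) ^ j * gbinom ((i : ℂ) + α) (i - j) * z ^ j / (j.factorial : ℂ)

/-! In formal power series, `L_j^{(α)}(z)` is the `j`-th coefficient of
`exp(-zX) · (1 + X)^(j + α)`. For `α = β - j` the sum is therefore the `i`-th coefficient of
`exp(-zX) · (1 + X)^β · (1 + X)^(-β) = exp(-zX)`, which is `(-z)^i / i!`. -/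

open PowerSeries

lemma PowerSeries.binomialSeries_mul_binomialSeries_neg {R A : Type*} [CommRing R] [BinomialRing R]
    [Ring A] [Algebra R A] (r : R) : binomialSeries A r * binomialSeries A (-r) = 1 := by
  rw [← binomialSeries_add, add_neg_cancel, binomialSeries_zero]

lemma gbinom_eq_ringChoose (x : ℂ) (k : ℕ) : gbinom x k = Ring.choose x k := by
  rw [Ring.choose_eq_smul, ← Polynomial.aeval_eq_smeval, ← Polynomial.eval_map_algebraMap,
    descPochhammer_map, descPochhammer_eval_eq_prod_range, gbinom, smul_eq_mul, div_eq_inv_mul]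

lemma coeff_binomialSeries_eq_gbinom (x : ℂ) (n : ℕ) :
    coeff n (PowerSeries.binomialSeries ℂ x) = gbinom x n := by
  rw [binomialSeries_coeff, smul_eq_mul, mul_one, gbinom_eq_ringChoose]

lemma lag_eq_coeff_rescale_exp_mul_binomialSeries (i : ℕ) (α z : ℂ) :
    lag i α z =
      coeff i (rescale (-z) (exp ℂ) * PowerSeries.binomialSeries ℂ ((i : ℂ) + α)) := by
  rw [coeff_mul, Finset.Nat.sum_antidiagonal_eq_sum_range_succ (fun j k =>
    coeff j (rescale (-z) (exp ℂ)) * coeff k (PowerSeries.binomialSeries ℂ ((i : ℂ) + α))),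
    lag]
  refine Finset.sum_congr rfl fun j _ => ?_
  rw [coeff_rescale, coeff_exp, coeff_binomialSeries_eq_gbinom, neg_pow]
  simp only [one_div, map_inv₀, map_natCast]
  ring

theorem monomial_as_laguerre_sum (i : ℕ) (β : ℂ) (z : ℂ) :
    z ^ i / (i.factorial : ℂ) =
      (-1 : ℂ) ^ i * ∑ j ∈ Finset.range (i + 1), gbinom (-β) (i - j) * lag j (β - j) z := by
  have hsum : ∑ j ∈ Finset.range (i + 1), gbinom (-β) (i - j) * lag j (β - j) z =
      coeff i (rescale (-z) (exp ℂ)) := by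
    rw [← mul_one (rescale (-z) (exp ℂ)), ← binomialSeries_mul_binomialSeries_neg β,
      ← mul_assoc, coeff_mul, Finset.Nat.sum_antidiagonal_eq_sum_range_succ (fun j k =>
        coeff j (rescale (-z) (exp ℂ) * PowerSeries.binomialSeries ℂ β) *
          coeff k (PowerSeries.binomialSeries ℂ (-β)))]
    refine Finset.sum_congr rfl fun j _ => ?_
    rw [lag_eq_coeff_rescale_exp_mul_binomialSeries, add_sub_cancel, coeff_binomialSeries_eq_gbinom,
      mul_comm]
  rw [hsum, coeff_rescale, coeff_exp, ← mul_assoc, ← mul_pow, neg_one_mul, neg_neg, one_div,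
    map_inv₀, map_natCast, div_eq_mul_inv]
end

section
/- The generalized Laguerre polynomials satisfy the recursion L_j^{(β-j)}(z) = -(1 + (z-β-1)/j) · L_{j-1}^{(β-j+1)}(z) - (z/j) · L_{j-2}^{(β-j+2)}(z) for all integers j ≥ 2. -/
open Finset

/-!
`L_i^{(β-i)}(z)` is the `i`-th coefficient of the generating function `F(t) = e^{-zt} (1+t)^β`.
Both factors satisfy first-order differential equations, `(1+t) B' = β B` and `E' = -z E`, so
`(1+t) F' = (β - z - z t) F`; comparing the coefficients of `t^{j-1}` gives the recursion.
-/

open PowerSeries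

theorem gbinom_zero (x : ℂ) : gbinom x 0 = 1 := by
  simp [gbinom]

theorem succ_mul_gbinom_succ (x : ℂ) (k : ℕ) :
    ((k : ℂ) + 1) * gbinom x (k + 1) = (x - k) * gbinom x k := by
  have hk : (k.factorial : ℂ) ≠ 0 := Nat.cast_ne_zero.2 k.factorial_ne_zero
  simp only [gbinom, prod_range_succ, Nat.factorial_succ]
  push_cast
  field_simp

theorem coeff_recurrence_of_one_add_X_mul_derivative {R : Type*} [CommRing R] {f : R⟦X⟧}
    {a b : R} (hf : (1 + X) * d⁄dX R f = (C a - C b * X) * f) (n : ℕ) :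
    ((n : R) + 2) * coeff (n + 2) f = (a - n - 1) * coeff (n + 1) f - b * coeff n f := by
  have h := congrArg (coeff (n + 1)) hf
  simp only [add_mul, one_mul, sub_mul, map_add, map_sub, coeff_succ_X_mul, coeff_derivative,
    coeff_C_mul, mul_assoc] at h
  push_cast at h
  linear_combination h

noncomputable def gbinomSeries (x : ℂ) : ℂ⟦X⟧ :=
  mk (gbinom x)

noncomputable def expMulSeries (a : ℂ) : ℂ⟦X⟧ :=
  mk fun k => a ^ k / k.factorial

noncomputable def laguerreSeries (β z : ℂ) : ℂ⟦X⟧ :=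
  expMulSeries (-z) * gbinomSeries β

theorem one_add_X_mul_derivative_gbinomSeries (x : ℂ) :
    (1 + X) * d⁄dX ℂ (gbinomSeries x) = C x * gbinomSeries x := by
  ext n
  rcases n with _ | n
  · simpa only [add_mul, one_mul, map_add, coeff_zero_X_mul, coeff_derivative, coeff_C_mul,
      gbinomSeries, coeff_mk, gbinom_zero, Nat.cast_zero, zero_add, mul_one, sub_zero,
      add_zero] using succ_mul_gbinom_succ x 0
  · have h := succ_mul_gbinom_succ x (n + 1)
    simp only [add_mul, one_mul, map_add, coeff_succ_X_mul, coeff_derivative, coeff_C_mul,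
      gbinomSeries, coeff_mk]
    push_cast at h ⊢
    linear_combination h

theorem derivative_expMulSeries (a : ℂ) :
    d⁄dX ℂ (expMulSeries a) = C a * expMulSeries a := by
  ext n
  have hn : (n.factorial : ℂ) ≠ 0 := Nat.cast_ne_zero.2 n.factorial_ne_zero
  simp only [expMulSeries, coeff_derivative, coeff_C_mul, coeff_mk, Nat.factorial_succ]
  push_cast
  field_simp
  ring

theorem one_add_X_mul_derivative_laguerreSeries (β z : ℂ) :
    (1 + X) * d⁄dX ℂ (laguerreSeries β z) = (C (β - z) - C z * X) * laguerreSeries β z := by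
  rw [laguerreSeries, Derivation.leibniz, derivative_expMulSeries, smul_eq_mul, smul_eq_mul,
    mul_add, mul_left_comm, one_add_X_mul_derivative_gbinomSeries]
  simp only [map_sub, map_neg]
  ring

theorem lag_sub_self_eq_coeff_laguerreSeries (i : ℕ) (β z : ℂ) :
    lag i (β - i) z = coeff i (laguerreSeries β z) := by
  rw [laguerreSeries, coeff_mul, Nat.sum_antidiagonal_eq_sum_range_succ
    (fun k m => coeff k (expMulSeries (-z)) * coeff m (gbinomSeries β)), lag, add_sub_cancel]
  refine sum_congr rfl fun k _ => ?_
  simp only [expMulSeries, gbinomSeries, coeff_mk, neg_pow z k]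
  ring

theorem laguerre_shifted_recursion (j : ℕ) (hj : 2 ≤ j) (β z : ℂ) :
    lag j (β - j) z =
      -(1 + (z - β - 1) / j) * lag (j - 1) (β - (j - 1)) z - (z / j) * lag (j - 2) (β - (j - 2)) z := by
  obtain ⟨n, rfl⟩ : ∃ n, j = n + 2 := ⟨j - 2, by omega⟩
  have hrec := coeff_recurrence_of_one_add_X_mul_derivative
    (one_add_X_mul_derivative_laguerreSeries β z) n
  have hn : (n : ℂ) + 2 ≠ 0 := by exact_mod_cast (n + 1).succ_ne_zero
  have e1 : β - (((n + 2 : ℕ) : ℂ) - 1) = β - ((n + 1 : ℕ) : ℂ) := by push_cast; ring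
  have e2 : β - (((n + 2 : ℕ) : ℂ) - 2) = β - (n : ℂ) := by push_cast; ring
  rw [e1, e2, show n + 2 - 1 = n + 1 from rfl, show n + 2 - 2 = n from rfl,
    lag_sub_self_eq_coeff_laguerreSeries, lag_sub_self_eq_coeff_laguerreSeries,
    lag_sub_self_eq_coeff_laguerreSeries]
  push_cast
  field_simp
  linear_combination hrec
end

section
/- For real α > -1 and nonnegative integers i, j, the orthogonality relation ∫_0^∞ z^α e^{-z} L_i^{(α)}(z) L_j^{(α)}(z) dz equals 0 if i ≠ j, and equals C(i+α, i) · Γ(α+1) if i = j. -/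
open Finset MeasureTheory

/-- Generalized binomial coefficient C(x, k) = x(x-1)⋯(x-k+1)/k! (real version). -/
noncomputable def gbinomR (x : ℝ) (k : ℕ) : ℝ :=
  (∏ j ∈ Finset.range k, (x - j)) / (k.factorial : ℝ)

/-- Generalized Laguerre polynomial, real version. -/
noncomputable def lagR (i : ℕ) (α z : ℝ) : ℝ :=
  ∑ j ∈ Finset.range (i + 1), (-1 : ℝ) ^ j * gbinomR ((i : ℝ) + α) (i - j) * z ^ j / (j.factorial : ℝ)

/-!
Expanding both polynomials reduces everything to the moments
`∫ z ^ α e^{-z} z ^ n = Γ(α + n + 1)`. For `k ≤ j` the pairing of `z ^ k` with `L_j^{(α)}`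
becomes `Γ(α + j + 1) / j! · ∑_l (-1)^l C(j, l) (α + l + 1)_k`, where the rising factorial
`(α + l + 1)_k = Γ(α + k + l + 1) / Γ(α + l + 1)` is a monic polynomial of degree `k` in `l`.
The alternating binomial sum is `(-1)^j` times a `j`-th forward difference, so it vanishes for
`k < j` and equals `(-1)^j j!` for `k = j`. Hence `L_j^{(α)}` is orthogonal to every polynomial
of lower degree, and for `i = j` only the leading coefficient `(-1)^i / i!` of `L_i^{(α)}`
contributes.
-/

open Polynomial

theorem neg_one_pow_mul_neg_one_pow {R : Type*} [Monoid R] [HasDistribNeg R] (n : ℕ) :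
    (-1 : R) ^ n * (-1) ^ n = 1 := by
  rw [← pow_add, ← two_mul, pow_mul, neg_one_sq, one_pow]

theorem Polynomial.sum_range_neg_one_pow_mul_choose_mul_eval {R : Type*} [CommRing R]
    (P : R[X]) {j : ℕ} (hP : P.natDegree ≤ j) :
    ∑ l ∈ range (j + 1), (-1 : R) ^ l * j.choose l * P.eval (l : R) =
      if P.natDegree = j then (-1) ^ j * j.factorial * P.leadingCoeff else 0 := by
  have hΔ : ∑ l ∈ range (j + 1), (-1 : R) ^ l * j.choose l * P.eval (l : R) =
      (-1) ^ j * (fwdDiff 1)^[j] P.eval 0 := by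
    rw [fwdDiff_iter_eq_sum_shift, mul_sum]
    refine sum_congr rfl fun l hl => ?_
    rw [zsmul_eq_mul, zero_add, nsmul_one, ← pow_sub_mul_pow (-1 : R) (mem_range_succ_iff.mp hl)]
    push_cast
    linear_combination
      (-(-1) ^ l * (j.choose l : R) * P.eval (l : R)) * neg_one_pow_mul_neg_one_pow (R := R) (j - l)
  rw [hΔ]
  split_ifs with h
  · rw [← h, P.fwdDiff_iter_degree_eq_factorial]
    simp only [Pi.smul_apply, Pi.natCast_apply, smul_eq_mul]
    ring
  · rw [P.fwdDiff_iter_eq_zero_of_degree_lt (lt_of_le_of_ne hP h)]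
    simp

theorem Real.Gamma_mul_ascPochhammer_eval {x : ℝ} (hx : 0 < x) (n : ℕ) :
    Real.Gamma x * (ascPochhammer ℝ n).eval x = Real.Gamma (x + n) := by
  induction n with
  | zero => simp
  | succ n ih =>
    rw [ascPochhammer_succ_eval, ← mul_assoc, ih, Nat.cast_succ, ← add_assoc,
      Real.Gamma_add_one (by positivity)]
    ring

theorem gbinomR_add_nat_mul_Gamma {x : ℝ} (hx : -1 < x) (n : ℕ) :
    gbinomR (x + n) n * Real.Gamma (x + 1) = Real.Gamma (x + n + 1) / n.factorial := by
  have hdesc : ∏ m ∈ range n, (x + n - m) = (ascPochhammer ℝ n).eval (x + 1) := by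
    rw [← descPochhammer_eval_eq_prod_range, descPochhammer_eval_eq_ascPochhammer,
      add_sub_cancel_right]
  rw [gbinomR, hdesc, div_mul_eq_mul_div, mul_comm,
    Real.Gamma_mul_ascPochhammer_eval (by linarith), add_right_comm]

noncomputable def lagRCoeff (i : ℕ) (α : ℝ) (k : ℕ) : ℝ :=
  (-1) ^ k * gbinomR ((i : ℝ) + α) (i - k) / k.factorial

theorem lagR_eq_sum_lagRCoeff (i : ℕ) (α z : ℝ) :
    lagR i α z = ∑ k ∈ range (i + 1), lagRCoeff i α k * z ^ k :=
  sum_congr rfl fun k _ => by rw [lagRCoeff]; ring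

theorem lagRCoeff_mul_Gamma {α : ℝ} (hα : -1 < α) {j l : ℕ} (hl : l ≤ j) (k : ℕ) :
    lagRCoeff j α l * Real.Gamma (α + (k + l : ℕ) + 1) =
      Real.Gamma (α + j + 1) / j.factorial *
        ((-1) ^ l * j.choose l * ((ascPochhammer ℝ k).comp (X + C (α + 1))).eval (l : ℝ)) := by
  have hl₀ : (0 : ℝ) ≤ l := l.cast_nonneg
  have hGamma : Real.Gamma (α + (k + l : ℕ) + 1) =
      Real.Gamma (α + l + 1) * (ascPochhammer ℝ k).eval (α + l + 1) := by
    rw [Real.Gamma_mul_ascPochhammer_eval (by linarith), Nat.cast_add]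
    ring_nf
  have hbinom : gbinomR (j + α) (j - l) * Real.Gamma (α + l + 1) =
      Real.Gamma (α + j + 1) / (j - l).factorial := by
    convert gbinomR_add_nat_mul_Gamma (x := α + l) (by linarith) (j - l) using 3 <;>
      push_cast [hl] <;> ring
  rw [Nat.cast_choose ℝ hl, eval_comp, hGamma]
  simp only [eval_add, eval_X, eval_C]
  calc _ = (-1) ^ l / l.factorial * (gbinomR (j + α) (j - l) * Real.Gamma (α + l + 1)) *
        (ascPochhammer ℝ k).eval (α + l + 1) := by rw [lagRCoeff]; ring
    _ = _ := by
      rw [hbinom, show (l : ℝ) + (α + 1) = α + l + 1 by ring]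
      field_simp

theorem sum_lagRCoeff_mul_Gamma {α : ℝ} (hα : -1 < α) {j k : ℕ} (hk : k ≤ j) :
    ∑ l ∈ range (j + 1), lagRCoeff j α l * Real.Gamma (α + (k + l : ℕ) + 1) =
      if k = j then (-1) ^ j * Real.Gamma (α + j + 1) else 0 := by
  set Q : ℝ[X] := (ascPochhammer ℝ k).comp (X + C (α + 1))
  have hQ : Q.Monic := (monic_ascPochhammer ℝ k).comp_X_add_C _
  have hQdeg : Q.natDegree = k := by
    rw [natDegree_comp, ascPochhammer_natDegree, natDegree_X_add_C, mul_one]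
  rw [sum_congr rfl fun l hl => lagRCoeff_mul_Gamma hα (mem_range_succ_iff.mp hl) k, ← mul_sum,
    Q.sum_range_neg_one_pow_mul_choose_mul_eval (hQdeg ▸ hk), hQdeg, hQ.leadingCoeff]
  split_ifs
  · field_simp
  · rw [mul_zero]

theorem GammaIntegrand_eqOn_rpow_mul_exp_neg_mul_pow (α : ℝ) (n : ℕ) :
    Set.EqOn (fun z : ℝ => Real.exp (-z) * z ^ (α + n + 1 - 1))
      (fun z : ℝ => z ^ α * Real.exp (-z) * z ^ n) (Set.Ioi 0) := fun z hz => by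
  simp only
  rw [add_sub_cancel_right, Real.rpow_add hz, Real.rpow_natCast]
  ring

theorem integrableOn_rpow_mul_exp_neg_mul_pow {α : ℝ} (hα : -1 < α) (n : ℕ) :
    IntegrableOn (fun z : ℝ => z ^ α * Real.exp (-z) * z ^ n) (Set.Ioi 0) :=
  (Real.GammaIntegral_convergent (by linarith [(n.cast_nonneg : (0 : ℝ) ≤ n)])).congr_fun
    (GammaIntegrand_eqOn_rpow_mul_exp_neg_mul_pow α n) measurableSet_Ioi

theorem integral_rpow_mul_exp_neg_mul_pow {α : ℝ} (hα : -1 < α) (n : ℕ) :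
    ∫ z in Set.Ioi (0 : ℝ), z ^ α * Real.exp (-z) * z ^ n = Real.Gamma (α + n + 1) := by
  rw [Real.Gamma_eq_integral (by linarith [(n.cast_nonneg : (0 : ℝ) ≤ n)])]
  exact (setIntegral_congr_fun measurableSet_Ioi
    (GammaIntegrand_eqOn_rpow_mul_exp_neg_mul_pow α n)).symm

theorem integral_rpow_mul_exp_neg_mul_sum {ι : Type*} {α : ℝ} (hα : -1 < α) (s : Finset ι)
    (a : ι → ℝ) (e : ι → ℕ) :
    ∫ z in Set.Ioi (0 : ℝ), z ^ α * Real.exp (-z) * ∑ i ∈ s, a i * z ^ e i =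
      ∑ i ∈ s, a i * Real.Gamma (α + e i + 1) := by
  simp_rw [mul_sum, mul_left_comm _ (a _)]
  rw [integral_finsetSum _ fun i _ =>
    (integrableOn_rpow_mul_exp_neg_mul_pow hα (e i)).const_mul _]
  simp_rw [integral_const_mul, integral_rpow_mul_exp_neg_mul_pow hα]

theorem lagR_mul_lagR (i j : ℕ) (α z : ℝ) :
    lagR i α z * lagR j α z = ∑ p ∈ range (i + 1) ×ˢ range (j + 1),
      lagRCoeff i α p.1 * lagRCoeff j α p.2 * z ^ (p.1 + p.2) := by
  rw [lagR_eq_sum_lagRCoeff, lagR_eq_sum_lagRCoeff, sum_mul_sum, sum_product]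
  exact sum_congr rfl fun k _ => sum_congr rfl fun l _ => by ring

theorem integral_lagR_mul_lagR_of_le {α : ℝ} (hα : -1 < α) {i j : ℕ} (hij : i ≤ j) :
    ∫ z in Set.Ioi (0 : ℝ), z ^ α * Real.exp (-z) * lagR i α z * lagR j α z =
      if i = j then Real.Gamma (α + i + 1) / i.factorial else 0 := by
  simp_rw [mul_assoc (_ * _), lagR_mul_lagR]
  rw [integral_rpow_mul_exp_neg_mul_sum hα, sum_product]
  simp_rw [mul_assoc (lagRCoeff i α _), ← mul_sum]
  rw [sum_congr rfl fun k hk => by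
    rw [sum_lagRCoeff_mul_Gamma hα ((mem_range_succ_iff.mp hk).trans hij)]]
  split_ifs with h
  · subst h
    rw [sum_eq_single_of_mem i (self_mem_range_succ i) fun k _ hk => by rw [if_neg hk, mul_zero],
      if_pos rfl, lagRCoeff]
    simp only [Nat.sub_self, gbinomR, prod_range_zero, Nat.factorial_zero, Nat.cast_one, div_one]
    linear_combination
      (Real.Gamma (α + i + 1) / i.factorial) * neg_one_pow_mul_neg_one_pow (R := ℝ) i
  · exact sum_eq_zero fun k hk => by
      rw [if_neg (by have := mem_range_succ_iff.mp hk; omega), mul_zero]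

theorem laguerre_orthogonality (α : ℝ) (hα : -1 < α) (i j : ℕ) :
    ∫ z in Set.Ioi (0 : ℝ), z ^ α * Real.exp (-z) * lagR i α z * lagR j α z =
      if i = j then gbinomR ((i : ℝ) + α) i * Real.Gamma (α + 1) else 0 := by
  rw [add_comm (i : ℝ), gbinomR_add_nat_mul_Gamma hα]
  rcases le_total i j with hij | hji
  · exact integral_lagR_mul_lagR_of_le hα hij
  · simp_rw [mul_right_comm _ (lagR i α _), integral_lagR_mul_lagR_of_le hα hji]
    rcases eq_or_ne j i with rfl | hne
    · rfl
    · rw [if_neg hne, if_neg hne.symm]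
end

section
/- For complex a, b, z with Re(a) > 0 and Re(z) > 0, Kummer's function of the second kind has the integral representation U(a,b,z) = (1/Γ(a)) ∫_0^∞ e^{-zt} t^{a-1} (1+t)^{b-a-1} dt, and this function satisfies Kummer's differential equation z·y'' + (b-z)·y' - a·y = 0. -/
/-!
Write `k(z, t) = e^{-zt} t^{a-1} (1+t)^{b-a-1}` and `Kₙ(z) = ∫_0^∞ tⁿ k(z, t) dt`, so that
`U = K₀ / Γ(a)`. Differentiating under the integral sign gives `Kₙ' = -Kₙ₊₁`, hence
`z U'' + (b - z) U' - a U = (z K₂ - (b - z) K₁ - a K₀) / Γ(a)`. The integrand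
`(z t² - (b - z) t - a) k(z, t)` of the right-hand side is the `t`-derivative of
`-e^{-zt} t^a (1+t)^{b-a}`, which vanishes at `t = 0` because `Re a > 0` and as `t → ∞`
because `Re z > 0`. All integrals are dominated via `(1+t)^q ≤ 2^|q| (1 + t^|q|)`.
-/

open MeasureTheory

/-- Kummer's function of the second kind, defined via the Laplace-type integral
U(a,b,z) = (1/Γ(a)) ∫_0^∞ e^{-zt} t^{a-1} (1+t)^{b-a-1} dt. -/
noncomputable def kummerU (a b z : ℂ) : ℂ :=
  (1 / Complex.Gamma a) *
    ∫ t in Set.Ioi (0 : ℝ), Complex.exp (-z * t) * (t : ℂ) ^ (a - 1) * ((1 : ℂ) + t) ^ (b - a - 1)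

open Set Filter Topology

namespace Real

lemma one_add_rpow_le {t : ℝ} (ht : 0 ≤ t) (q : ℝ) :
    (1 + t) ^ q ≤ 2 ^ |q| * (1 + t ^ |q|) := by
  have hmax : max 1 t ^ |q| ≤ 1 + t ^ |q| := by
    rcases max_cases 1 t with ⟨h, -⟩ | ⟨h, -⟩ <;> rw [h]
    · simp [rpow_nonneg ht]
    · linarith
  calc (1 + t) ^ q ≤ (1 + t) ^ |q| := rpow_le_rpow_of_exponent_le (by linarith) (le_abs_self q)
    _ ≤ (2 * max 1 t) ^ |q| := by
        gcongr
        linarith [le_max_left 1 t, le_max_right 1 t]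
    _ = 2 ^ |q| * max 1 t ^ |q| := mul_rpow zero_le_two (by positivity)
    _ ≤ 2 ^ |q| * (1 + t ^ |q|) := by gcongr

lemma rpow_mul_one_add_rpow_mul_exp_le {p q c t : ℝ} (ht : 0 < t) :
    t ^ p * (1 + t) ^ q * exp (-c * t)
      ≤ 2 ^ |q| * (t ^ p * exp (-c * t) + t ^ (p + |q|) * exp (-c * t)) := by
  calc t ^ p * (1 + t) ^ q * exp (-c * t)
      ≤ t ^ p * (2 ^ |q| * (1 + t ^ |q|)) * exp (-c * t) := by
        gcongr; exact one_add_rpow_le ht.le q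
    _ = _ := by rw [rpow_add ht]; ring

lemma continuousOn_rpow_mul_one_add_rpow_mul_exp (p q c : ℝ) :
    ContinuousOn (fun t => t ^ p * (1 + t) ^ q * exp (-c * t)) (Ioi 0) := by
  intro t (ht : 0 < t)
  apply ContinuousAt.continuousWithinAt
  fun_prop (disch := exact Or.inl (by positivity))

lemma integrableOn_rpow_mul_one_add_rpow_mul_exp {p c : ℝ} (hp : -1 < p) (hc : 0 < c) (q : ℝ) :
    IntegrableOn (fun t => t ^ p * (1 + t) ^ q * exp (-c * t)) (Ioi 0) := by
  have hexp (s : ℝ) (hs : -1 < s) : IntegrableOn (fun t => t ^ s * exp (-c * t)) (Ioi 0) := by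
    simpa using integrableOn_rpow_mul_exp_neg_mul_rpow hs zero_lt_one hc
  have hbound := ((hexp p hp).add (hexp (p + |q|) (by linarith [abs_nonneg q]))).const_mul (2 ^ |q|)
  refine Integrable.mono' hbound
    ((continuousOn_rpow_mul_one_add_rpow_mul_exp p q c).aestronglyMeasurable measurableSet_Ioi) ?_
  refine (ae_restrict_iff' measurableSet_Ioi).2 (ae_of_all _ fun t (ht : 0 < t) => ?_)
  rw [norm_of_nonneg (by positivity)]
  exact rpow_mul_one_add_rpow_mul_exp_le ht

lemma tendsto_rpow_mul_one_add_rpow_mul_exp_atTop (p q : ℝ) {c : ℝ} (hc : 0 < c) :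
    Tendsto (fun t => t ^ p * (1 + t) ^ q * exp (-c * t)) atTop (𝓝 0) := by
  have hbound := ((tendsto_rpow_mul_exp_neg_mul_atTop_nhds_zero p c hc).add
    (tendsto_rpow_mul_exp_neg_mul_atTop_nhds_zero (p + |q|) c hc)).const_mul (2 ^ |q|)
  rw [add_zero, mul_zero] at hbound
  refine squeeze_zero' ?_ ?_ hbound
  · filter_upwards [eventually_gt_atTop 0] with t ht using by positivity
  · filter_upwards [eventually_gt_atTop 0] with t ht using rpow_mul_one_add_rpow_mul_exp_le ht

end Real

noncomputable def kummerKernel (a b z : ℂ) (t : ℝ) : ℂ :=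
  Complex.exp (-z * t) * (t : ℂ) ^ (a - 1) * ((1 : ℂ) + t) ^ (b - a - 1)

noncomputable def kummerMoment (a b : ℂ) (n : ℕ) (z : ℂ) : ℂ :=
  ∫ t in Ioi (0 : ℝ), (t : ℂ) ^ n * kummerKernel a b z t

noncomputable def kummerPrimitive (a b z : ℂ) (t : ℝ) : ℂ :=
  -(Complex.exp (-z * t) * (t : ℂ) ^ a * ((1 : ℂ) + t) ^ (b - a))

lemma norm_cexp_mul_cpow_mul_one_add_cpow (z u v : ℂ) {t : ℝ} (ht : 0 < t) :
    ‖Complex.exp (-z * t) * (t : ℂ) ^ u * ((1 : ℂ) + t) ^ v‖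
      = t ^ u.re * (1 + t) ^ v.re * Real.exp (-z.re * t) := by
  have h1t : ((1 : ℂ) + t) = ((1 + t : ℝ) : ℂ) := by push_cast; rfl
  rw [norm_mul, norm_mul, h1t, Complex.norm_exp, Complex.norm_cpow_eq_rpow_re_of_pos ht,
    Complex.norm_cpow_eq_rpow_re_of_pos (by positivity)]
  simp only [neg_mul, Complex.neg_re, Complex.re_mul_ofReal]
  ring

section
variable {a b z : ℂ}

lemma continuousOn_pow_mul_kummerKernel (n : ℕ) :
    ContinuousOn (fun t : ℝ => (t : ℂ) ^ n * kummerKernel a b z t) (Ioi 0) := by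
  intro t (ht : 0 < t)
  apply ContinuousAt.continuousWithinAt
  have := Complex.continuous_ofReal
  unfold kummerKernel
  fun_prop (disch := exact Complex.mem_slitPlane_iff.2 (Or.inl (by simp; positivity)))

lemma norm_pow_mul_kummerKernel_le {c t : ℝ} (ht : 0 < t) (hc : c ≤ z.re) (n : ℕ) :
    ‖(t : ℂ) ^ n * kummerKernel a b z t‖
      ≤ t ^ (n + a.re - 1) * (1 + t) ^ (b.re - a.re - 1) * Real.exp (-c * t) := by
  rw [norm_mul, kummerKernel, norm_cexp_mul_cpow_mul_one_add_cpow _ _ _ ht, norm_pow,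
    Complex.norm_real, Real.norm_of_nonneg ht.le, add_sub_assoc, Real.rpow_add ht,
    Real.rpow_natCast]
  simp only [Complex.sub_re, Complex.one_re, mul_assoc]
  gcongr

lemma integrableOn_pow_mul_kummerKernel (ha : 0 < a.re) (hz : 0 < z.re) (n : ℕ) :
    IntegrableOn (fun t : ℝ => (t : ℂ) ^ n * kummerKernel a b z t) (Ioi 0) := by
  refine Integrable.mono'
    (Real.integrableOn_rpow_mul_one_add_rpow_mul_exp (p := n + a.re - 1)
      (by linarith [n.cast_nonneg (α := ℝ)]) hz (b.re - a.re - 1))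
    ((continuousOn_pow_mul_kummerKernel n).aestronglyMeasurable measurableSet_Ioi)
    ((ae_restrict_iff' measurableSet_Ioi).2 (ae_of_all _ fun t ht => ?_))
  exact norm_pow_mul_kummerKernel_le ht le_rfl n

lemma hasDerivAt_kummerKernel (t : ℝ) :
    HasDerivAt (fun w => kummerKernel a b w t) (-t * kummerKernel a b z t) z := by
  have hlin : HasDerivAt (fun w : ℂ => -w * t) (-t) z := by
    simpa using (hasDerivAt_neg z).mul_const (t : ℂ)
  exact ((hlin.cexp.mul_const _).mul_const _).congr_deriv (by simp only [kummerKernel]; ring)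

lemma hasDerivAt_kummerMoment (ha : 0 < a.re) (hz : 0 < z.re) (n : ℕ) :
    HasDerivAt (kummerMoment a b n) (-kummerMoment a b (n + 1) z) z := by
  have hc : 0 < z.re / 2 := by positivity
  have hs : {w : ℂ | z.re / 2 < w.re} ∈ 𝓝 z :=
    (isOpen_lt continuous_const Complex.continuous_re).mem_nhds (half_lt_self hz)
  have key := hasDerivAt_integral_of_dominated_loc_of_deriv_le (μ := volume.restrict (Ioi 0))
    (F := fun w (t : ℝ) => (t : ℂ) ^ n * kummerKernel a b w t)
    (F' := fun w (t : ℝ) => -((t : ℂ) ^ (n + 1) * kummerKernel a b w t)) hs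
    (Eventually.of_forall fun w => (continuousOn_pow_mul_kummerKernel n).aestronglyMeasurable
      measurableSet_Ioi)
    (integrableOn_pow_mul_kummerKernel ha hz n)
    ((continuousOn_pow_mul_kummerKernel (n + 1)).aestronglyMeasurable measurableSet_Ioi).neg
    ((ae_restrict_iff' measurableSet_Ioi).2 (ae_of_all _ fun t ht w hw => by
      rw [norm_neg]
      exact norm_pow_mul_kummerKernel_le ht (le_of_lt hw) (n + 1)))
    (Real.integrableOn_rpow_mul_one_add_rpow_mul_exp (p := (n + 1 : ℕ) + a.re - 1)
      (by push_cast; linarith [n.cast_nonneg (α := ℝ)]) hc (b.re - a.re - 1))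
    (ae_of_all _ fun t w _ =>
      ((hasDerivAt_kummerKernel t).const_mul ((t : ℂ) ^ n)).congr_deriv (by ring))
  exact key.2.congr_deriv (integral_neg _)

lemma hasDerivAt_kummerPrimitive {t : ℝ} (ht : 0 < t) :
    HasDerivAt (kummerPrimitive a b z)
      ((z * t ^ 2 - (b - z) * t - a) * kummerKernel a b z t) t := by
  have ht₀ : (t : ℂ) ≠ 0 := by exact_mod_cast ht.ne'
  have ht₁ : (1 : ℂ) + t ≠ 0 := by exact_mod_cast (by positivity : (1 : ℝ) + t ≠ 0)
  have hslit : (t : ℂ) ∈ Complex.slitPlane := Complex.ofReal_mem_slitPlane.2 ht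
  have hslit₁ : (1 : ℂ) + t ∈ Complex.slitPlane := by
    exact_mod_cast Complex.ofReal_mem_slitPlane.2 (by positivity : (0 : ℝ) < 1 + t)
  have h := ((((hasDerivAt_id' (t : ℂ)).const_mul (-z)).cexp.mul
    ((hasDerivAt_id' _).cpow_const (c := a) hslit)).mul
    (((hasDerivAt_id' _).const_add 1).cpow_const (c := b - a) hslit₁)).neg.comp_ofReal
  refine h.congr_deriv ?_
  simp only [kummerKernel, Pi.mul_apply, Complex.cpow_sub _ _ ht₀, Complex.cpow_sub _ _ ht₁,
    Complex.cpow_one]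
  field_simp
  ring

lemma kummerPrimitive_zero (ha : 0 < a.re) : kummerPrimitive a b z 0 = 0 := by
  have ha₀ : a ≠ 0 := fun h => by simp [h] at ha
  simp [kummerPrimitive, Complex.zero_cpow ha₀]

lemma continuousAt_kummerPrimitive_zero (ha : 0 < a.re) :
    ContinuousAt (kummerPrimitive a b z) 0 := by
  have := Complex.continuous_ofReal
  have := Complex.continuous_ofReal_cpow_const ha
  unfold kummerPrimitive
  fun_prop (disch := norm_num [Complex.mem_slitPlane_iff])

lemma tendsto_kummerPrimitive_atTop (hz : 0 < z.re) :
    Tendsto (kummerPrimitive a b z) atTop (𝓝 0) := by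
  rw [tendsto_zero_iff_norm_tendsto_zero]
  refine (Real.tendsto_rpow_mul_one_add_rpow_mul_exp_atTop a.re (b - a).re hz).congr' ?_
  filter_upwards [eventually_gt_atTop 0] with t ht
  rw [kummerPrimitive, norm_neg, norm_cexp_mul_cpow_mul_one_add_cpow _ _ _ ht]

lemma kummerMoment_relation (ha : 0 < a.re) (hz : 0 < z.re) :
    z * kummerMoment a b 2 z - (b - z) * kummerMoment a b 1 z - a * kummerMoment a b 0 z = 0 := by
  have hint := integrableOn_pow_mul_kummerKernel (b := b) ha hz
  have hres := (((hint 2).const_mul z).sub ((hint 1).const_mul (b - z))).sub ((hint 0).const_mul a)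
  have hIBP := integral_Ioi_of_hasDerivAt_of_tendsto
    (continuousAt_kummerPrimitive_zero (b := b) (z := z) ha).continuousWithinAt
    (fun t ht => hasDerivAt_kummerPrimitive ht) (IntegrableOn.congr_fun hres
      (fun t _ => by simp only [Pi.sub_apply]; ring) measurableSet_Ioi)
    (tendsto_kummerPrimitive_atTop hz)
  rw [kummerPrimitive_zero ha, sub_zero] at hIBP
  rw [← hIBP, kummerMoment, kummerMoment, kummerMoment, ← integral_const_mul,
    ← integral_const_mul, ← integral_const_mul, ← integral_sub, ← integral_sub]
  · congr 1
    funext t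
    ring
  exacts [((hint 2).const_mul z).sub ((hint 1).const_mul (b - z)), (hint 0).const_mul a,
    (hint 2).const_mul z, (hint 1).const_mul (b - z)]

lemma kummerU_eq_kummerMoment : kummerU a b z = 1 / Complex.Gamma a * kummerMoment a b 0 z := by
  simp [kummerU, kummerMoment, kummerKernel]

lemma hasDerivAt_kummerU (ha : 0 < a.re) (hz : 0 < z.re) :
    HasDerivAt (kummerU a b) (-(1 / Complex.Gamma a * kummerMoment a b 1 z)) z := by
  have h := (hasDerivAt_kummerMoment (b := b) ha hz 0).const_mul (1 / Complex.Gamma a)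
  rw [mul_neg] at h
  exact h.congr_of_eventuallyEq (Eventually.of_forall fun w => kummerU_eq_kummerMoment)

lemma deriv_deriv_kummerU (ha : 0 < a.re) (hz : 0 < z.re) :
    deriv (deriv (kummerU a b)) z = 1 / Complex.Gamma a * kummerMoment a b 2 z := by
  have hderiv : deriv (kummerU a b) =ᶠ[𝓝 z]
      fun w => -(1 / Complex.Gamma a * kummerMoment a b 1 w) := by
    filter_upwards [(isOpen_lt continuous_const Complex.continuous_re).mem_nhds hz] with w hw
    exact (hasDerivAt_kummerU ha hw).deriv
  rw [hderiv.deriv_eq]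
  simpa using ((hasDerivAt_kummerMoment ha hz 1).const_mul (1 / Complex.Gamma a)).neg.deriv

end

theorem kummerU_solves_kummer_ode (a b : ℂ) (ha : 0 < a.re) :
    ∀ z : ℂ, 0 < z.re →
      z * deriv (deriv (fun w => kummerU a b w)) z
        + (b - z) * deriv (fun w => kummerU a b w) z - a * kummerU a b z = 0 := by
  intro z hz
  rw [deriv_deriv_kummerU ha hz, (hasDerivAt_kummerU ha hz).deriv, kummerU_eq_kummerMoment]
  linear_combination 1 / Complex.Gamma a * kummerMoment_relation ha hz
end
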